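/- arXiv:2401.03994 — 4 statements merged into one kernel-verified Lean document; each statement's English description precedes it below -/
import Mathlib

section
/- Let u:ℝ³→ℝ be continuous with u ≥ 0 and ∫_{ℝ³} u(x)³ dx < ∞. Define α = (1/(2π²))∫_{ℝ³} u(y)³ dy and k(x) = (1/(2π²))∫_{ℝ³} ln(|y|/|x−y|)·u(y)³ dy. Then there exists a constant C such that −k(x) ≤ α·ln|x| + C for all x∈ℝ³ with |x| ≥ 2. -/
open MeasureTheory Real Filter
open Metric Set

lemma integrable_maxlog_aux :
    Integrable (fun y : EuclideanSpace ℝ (Fin 3) => max 0 (-Real.log ‖y‖)) := by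
  have hmeas : Measurable (fun y : EuclideanSpace ℝ (Fin 3) => max 0 (-Real.log ‖y‖)) :=
    measurable_const.max (Real.measurable_log.comp measurable_norm).neg
  refine ⟨hmeas.aestronglyMeasurable, ?_⟩
  rw [hasFiniteIntegral_iff_ofReal (f := fun y : EuclideanSpace ℝ (Fin 3) => max 0 (-Real.log ‖y‖)) (ae_of_all _ fun y => le_max_left _ _)]
  rw [lintegral_eq_lintegral_meas_lt (f := fun y : EuclideanSpace ℝ (Fin 3) => max 0 (-Real.log ‖y‖)) _ (ae_of_all _ fun y => le_max_left _ _)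
    hmeas.aemeasurable]
  have key : ∀ t ∈ Ioi (0:ℝ),
      volume {y : EuclideanSpace ℝ (Fin 3) | t < max 0 (-Real.log ‖y‖)}
        ≤ ENNReal.ofReal (Real.exp (-t) ^ 3) * volume (ball (0 : EuclideanSpace ℝ (Fin 3)) 1) := by
    intro t ht
    have hsub : {y : EuclideanSpace ℝ (Fin 3) | t < max 0 (-Real.log ‖y‖)}
        ⊆ ball (0 : EuclideanSpace ℝ (Fin 3)) (Real.exp (-t)) := by
      intro y hy
      simp only [mem_setOf_eq] at hy
      have hlog : t < -Real.log ‖y‖ := by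
        rcases max_cases 0 (-Real.log ‖y‖) with ⟨h1, _⟩ | ⟨h1, _⟩
        · rw [h1] at hy; exact absurd hy (not_lt.2 ht.out.le)
        · rwa [h1] at hy
      have hny : ‖y‖ ≠ 0 := by
        intro h
        rw [h, Real.log_zero, neg_zero] at hlog
        exact absurd hlog (not_lt.2 ht.out.le)
      have hpos : 0 < ‖y‖ := lt_of_le_of_ne (norm_nonneg y) (Ne.symm hny)
      rw [mem_ball, dist_zero_right]
      calc ‖y‖ = Real.exp (Real.log ‖y‖) := (Real.exp_log hpos).symm
        _ < Real.exp (-t) := Real.exp_lt_exp.2 (by linarith)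
    calc volume {y : EuclideanSpace ℝ (Fin 3) | t < max 0 (-Real.log ‖y‖)}
        ≤ volume (ball (0 : EuclideanSpace ℝ (Fin 3)) (Real.exp (-t))) := measure_mono hsub
      _ = ENNReal.ofReal (Real.exp (-t) ^ 3) * volume (ball (0 : EuclideanSpace ℝ (Fin 3)) 1) := by
          rw [Measure.addHaar_ball _ _ (Real.exp_pos _).le]
          congr 2
          simp [finrank_euclideanSpace]
  calc ∫⁻ t in Ioi (0:ℝ), volume {y : EuclideanSpace ℝ (Fin 3) | t < max 0 (-Real.log ‖y‖)}
      ≤ ∫⁻ t in Ioi (0:ℝ),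
          ENNReal.ofReal (Real.exp (-t) ^ 3) * volume (ball (0 : EuclideanSpace ℝ (Fin 3)) 1) :=
        setLIntegral_mono (by fun_prop) key
    _ = (∫⁻ t in Ioi (0:ℝ), ENNReal.ofReal (Real.exp (-t) ^ 3))
          * volume (ball (0 : EuclideanSpace ℝ (Fin 3)) 1) :=
        lintegral_mul_const' _ _ measure_ball_lt_top.ne
    _ < ⊤ := by
        refine ENNReal.mul_lt_top ?_ measure_ball_lt_top
        have hint : IntegrableOn (fun x : ℝ => Real.exp (-1 * x)) (Ioi 0) :=
          exp_neg_integrableOn_Ioi 0 one_pos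
        have := hint.2
        rw [hasFiniteIntegral_iff_ofReal (ae_of_all _ fun t => (Real.exp_pos _).le)] at this
        refine lt_of_le_of_lt (setLIntegral_mono (by fun_prop) fun t ht => ?_) this
        refine ENNReal.ofReal_le_ofReal ?_
        have ht' : (0:ℝ) < t := ht
        have h1 : Real.exp (-t) ^ 3 ≤ Real.exp (-t) ^ 1 :=
          pow_le_pow_of_le_one (Real.exp_pos _).le
            (Real.exp_le_one_iff.2 (by linarith)) (by norm_num)
        simpa using h1

/-- Lemma 2.3: upper bound `-k(x) ≤ α ln|x| + C` for the logarithmic potential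
`k(x) = (1/(2π²)) ∫ ln(|y|/|x-y|) u(y)³ dy` with total curvature
`α = (1/(2π²)) ∫ u³`. -/

theorem log_potential_lower_bound_3d
    (u : EuclideanSpace ℝ (Fin 3) → ℝ)
    (hu_cont : Continuous u) (hu_nonneg : ∀ x, 0 ≤ u x)
    (hu3 : Integrable (fun x => u x ^ 3)) :
    ∃ C : ℝ, ∀ x : EuclideanSpace ℝ (Fin 3), 2 ≤ ‖x‖ →
      -((1 / (2 * π ^ 2)) * ∫ y, Real.log (‖y‖ / ‖x - y‖) * u y ^ 3) ≤
        ((1 / (2 * π ^ 2)) * ∫ y, u y ^ 3) * Real.log ‖x‖ + C := by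
  set c : ℝ := 1 / (2 * π ^ 2) with hc
  have hcpos : 0 < c := by positivity
  -- bound for u^3 on the closed unit ball
  obtain ⟨z, hz, hmax'⟩ := (isCompact_closedBall (0 : EuclideanSpace ℝ (Fin 3)) 1).exists_isMaxOn
    (nonempty_closedBall.2 zero_le_one) (hu_cont.pow 3).continuousOn
  have hmax : ∀ w ∈ closedBall (0 : EuclideanSpace ℝ (Fin 3)) 1, u w ^ 3 ≤ u z ^ 3 :=
    fun w hw => hmax' hw
  set M : ℝ := u z ^ 3 with hM
  have hM0 : 0 ≤ M := pow_nonneg (hu_nonneg z) 3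
  -- integrability of the singular part
  have hsing : Integrable (fun y : EuclideanSpace ℝ (Fin 3) => max 0 (-Real.log ‖y‖) * u y ^ 3) := by
    refine (integrable_maxlog_aux.const_mul M).mono' ?_ (ae_of_all _ fun y => ?_)
    · exact ((measurable_const.max (Real.measurable_log.comp measurable_norm).neg).mul
        ((hu_cont.pow 3).measurable)).aestronglyMeasurable
    · by_cases hy : ‖y‖ ≤ 1
      · rw [Real.norm_eq_abs, abs_of_nonneg (mul_nonneg (le_max_left _ _)
          (pow_nonneg (hu_nonneg y) 3))]
        calc max 0 (-Real.log ‖y‖) * u y ^ 3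
            ≤ max 0 (-Real.log ‖y‖) * M :=
              mul_le_mul_of_nonneg_left
                (hmax y (by simpa [mem_closedBall, dist_zero_right] using hy)) (le_max_left _ _)
          _ = M * max 0 (-Real.log ‖y‖) := mul_comm _ _
      · have h1 : max 0 (-Real.log ‖y‖) = 0 := by
          refine max_eq_left ?_
          simp only [neg_nonpos]
          exact Real.log_nonneg (le_of_not_ge hy)
        rw [h1, zero_mul, norm_zero]
        positivity
  set g : EuclideanSpace ℝ (Fin 3) → ℝ :=
    fun y => (Real.log 2 + max 0 (-Real.log ‖y‖)) * u y ^ 3 with hgdef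
  have hg : Integrable g := by
    have : g = fun y => Real.log 2 * u y ^ 3 + max 0 (-Real.log ‖y‖) * u y ^ 3 := by
      funext y; simp [hgdef]; ring
    rw [this]
    exact (hu3.const_mul _).add hsing
  have hg0 : ∀ y, 0 ≤ g y := fun y => mul_nonneg
    (add_nonneg (Real.log_nonneg one_le_two) (le_max_left _ _)) (pow_nonneg (hu_nonneg y) 3)
  refine ⟨c * ∫ y, g y, fun x hx => ?_⟩
  have hxpos : (0:ℝ) < ‖x‖ := lt_of_lt_of_le two_pos hx
  have hlogx : 0 ≤ Real.log ‖x‖ := Real.log_nonneg (le_trans one_le_two hx)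
  -- pointwise scalar inequality
  have hpt : ∀ y : EuclideanSpace ℝ (Fin 3),
      -(Real.log (‖y‖ / ‖x - y‖)) ≤ Real.log ‖x‖ + (Real.log 2 + max 0 (-Real.log ‖y‖)) := by
    intro y
    have hRHS0 : 0 ≤ Real.log ‖x‖ + (Real.log 2 + max 0 (-Real.log ‖y‖)) := by
      have := Real.log_nonneg (one_le_two (α := ℝ))
      have := le_max_left (0:ℝ) (-Real.log ‖y‖)
      linarith
    have hlog2 : (0:ℝ) ≤ Real.log 2 := Real.log_nonneg one_le_two
    by_cases hy0 : ‖y‖ = 0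
    · simp only [hy0, zero_div, Real.log_zero, neg_zero, max_self]
      linarith
    by_cases hxy0 : ‖x - y‖ = 0
    · simp only [hxy0, div_zero, Real.log_zero, neg_zero]
      linarith
    have hy : 0 < ‖y‖ := lt_of_le_of_ne (norm_nonneg _) (Ne.symm hy0)
    have hxy : 0 < ‖x - y‖ := lt_of_le_of_ne (norm_nonneg _) (Ne.symm hxy0)
    rw [Real.log_div hy0 hxy0, neg_sub]
    by_cases hcase : ‖y‖ ≤ ‖x‖
    · have h2 : ‖x - y‖ ≤ 2 * ‖x‖ := by
        calc ‖x - y‖ ≤ ‖x‖ + ‖y‖ := norm_sub_le x y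
          _ ≤ 2 * ‖x‖ := by linarith
      have h3 : Real.log ‖x - y‖ ≤ Real.log 2 + Real.log ‖x‖ := by
        calc Real.log ‖x - y‖ ≤ Real.log (2 * ‖x‖) := Real.log_le_log hxy h2
          _ = Real.log 2 + Real.log ‖x‖ := Real.log_mul two_ne_zero (ne_of_gt hxpos)
      have h4 : -Real.log ‖y‖ ≤ max 0 (-Real.log ‖y‖) := le_max_right _ _
      linarith
    · have h2 : ‖x - y‖ ≤ 2 * ‖y‖ := by
        calc ‖x - y‖ ≤ ‖x‖ + ‖y‖ := norm_sub_le x y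
          _ ≤ 2 * ‖y‖ := by push_neg at hcase; linarith
      have h3 : Real.log ‖x - y‖ ≤ Real.log 2 + Real.log ‖y‖ := by
        calc Real.log ‖x - y‖ ≤ Real.log (2 * ‖y‖) := Real.log_le_log hxy h2
          _ = Real.log 2 + Real.log ‖y‖ := Real.log_mul two_ne_zero hy0
      have h4 : (0:ℝ) ≤ max 0 (-Real.log ‖y‖) := le_max_left _ _
      linarith
  by_cases hf : Integrable (fun y => Real.log (‖y‖ / ‖x - y‖) * u y ^ 3)
  · have hmono : ∫ y, -(Real.log (‖y‖ / ‖x - y‖) * u y ^ 3)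
        ≤ ∫ y, (Real.log ‖x‖ * u y ^ 3 + g y) := by
      refine integral_mono hf.neg ((hu3.const_mul _).add hg) fun y => ?_
      have := mul_le_mul_of_nonneg_right (hpt y) (pow_nonneg (hu_nonneg y) 3)
      simp only [hgdef]
      nlinarith [pow_nonneg (hu_nonneg y) 3]
    rw [integral_neg] at hmono
    have heq : ∫ y, (Real.log ‖x‖ * u y ^ 3 + g y)
        = Real.log ‖x‖ * (∫ y, u y ^ 3) + ∫ y, g y := by
      rw [integral_add (hu3.const_mul _) hg, integral_const_mul]
    rw [heq] at hmono
    calc -(c * ∫ y, Real.log (‖y‖ / ‖x - y‖) * u y ^ 3)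
        = c * -(∫ y, Real.log (‖y‖ / ‖x - y‖) * u y ^ 3) := by ring
      _ ≤ c * (Real.log ‖x‖ * (∫ y, u y ^ 3) + ∫ y, g y) :=
          mul_le_mul_of_nonneg_left hmono hcpos.le
      _ = (c * ∫ y, u y ^ 3) * Real.log ‖x‖ + c * ∫ y, g y := by ring
  · rw [integral_undef hf]
    have h1 : 0 ≤ c * ∫ y, u y ^ 3 :=
      mul_nonneg hcpos.le (integral_nonneg fun y => pow_nonneg (hu_nonneg y) 3)
    have h2 : 0 ≤ c * ∫ y, g y := mul_nonneg hcpos.le (integral_nonneg hg0)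
    have h3 : 0 ≤ (c * ∫ y, u y ^ 3) * Real.log ‖x‖ := mul_nonneg h1 hlogx
    simp only [mul_zero, neg_zero]
    linarith
end

section
/- Let v:ℝ⁴→ℝ be continuous with v ≥ 0 and ∫_{ℝ⁴} v(x)⁴ dx < ∞. Define α = (1/(8π²))∫_{ℝ⁴} v(y)⁴ dy and q(x) = (1/(8π²))∫_{ℝ⁴} ln(|x−y|/|y|)·v(y)⁴ dy. Then there exists a constant C such that q(x) ≤ α·ln|x| + C for all x∈ℝ⁴ with |x| ≥ 2. -/
/-!
For `1 ≤ ‖x‖` the kernel splits as `log (‖x - y‖ / ‖y‖) ≤ log ‖x‖ + log ((1 + ‖y‖) / ‖y‖)`, and the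
second term is a weight bounded by `‖y‖⁻¹`, hence locally integrable in dimension at least two and
at most one off the unit ball. Against the locally bounded, integrable density `v⁴` it therefore
has a finite integral, which serves as the constant.
-/

open MeasureTheory Real Metric Set

lemma log_one_add_div_self_nonneg {r : ℝ} (hr : 0 ≤ r) : 0 ≤ log ((1 + r) / r) := by
  rcases hr.eq_or_lt with rfl | hr
  · simp
  · exact log_nonneg ((one_le_div hr).2 (by linarith))

lemma log_one_add_div_self_le_inv {r : ℝ} (hr : 0 ≤ r) : log ((1 + r) / r) ≤ r⁻¹ := by
  rcases hr.eq_or_lt with rfl | hr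
  · simp
  · rw [add_div, div_self hr.ne', one_div]
    linarith [log_le_sub_one_of_pos (show 0 < r⁻¹ + 1 by positivity)]

/-- Since `‖x - y‖ ≤ ‖x‖ + ‖y‖ ≤ ‖x‖ (1 + ‖y‖)` once `1 ≤ ‖x‖`. -/
lemma log_norm_sub_div_norm_le {E : Type*} [SeminormedAddCommGroup E] {x : E} (hx : 1 ≤ ‖x‖)
    (y : E) : log (‖x - y‖ / ‖y‖) ≤ log ‖x‖ + log ((1 + ‖y‖) / ‖y‖) := by
  have hlogx : 0 ≤ log ‖x‖ := log_nonneg hx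
  rcases (norm_nonneg y).eq_or_lt with hy | hy
  · simp [← hy, hlogx]
  rcases (norm_nonneg (x - y)).eq_or_lt with hxy | hxy
  · simpa [← hxy] using add_nonneg hlogx (log_one_add_div_self_nonneg hy.le)
  have hsub : ‖x - y‖ ≤ ‖x‖ * (1 + ‖y‖) := by
    nlinarith [norm_sub_le x y, le_mul_of_one_le_left (norm_nonneg y) hx]
  calc log (‖x - y‖ / ‖y‖) ≤ log (‖x‖ * ((1 + ‖y‖) / ‖y‖)) := by
        rw [← mul_div_assoc]
        gcongr
    _ = log ‖x‖ + log ((1 + ‖y‖) / ‖y‖) := log_mul (by positivity) (by positivity)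

section

variable {E : Type*} [NormedAddCommGroup E] [NormedSpace ℝ E] [FiniteDimensional ℝ E]
  [MeasurableSpace E] [BorelSpace E] {μ : Measure E} [μ.IsAddHaarMeasure]

lemma integrable_log_one_add_norm_div_norm_mul (hd : 1 < Module.finrank ℝ E) {f : E → ℝ}
    (hf : Continuous f) (hfi : Integrable f μ) :
    Integrable (fun y => log ((1 + ‖y‖) / ‖y‖) * f y) μ := by
  have hmeas : AEStronglyMeasurable (fun y => log ((1 + ‖y‖) / ‖y‖) * f y) μ :=
    ((measurable_log.comp (by fun_prop)).mul hf.measurable).aestronglyMeasurable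
  have hnorm : ∀ y, ‖log ((1 + ‖y‖) / ‖y‖) * f y‖ ≤ ‖y‖⁻¹ * ‖f y‖ := fun y => by
    rw [norm_mul, Real.norm_of_nonneg (log_one_add_div_self_nonneg (norm_nonneg y))]
    gcongr
    exact log_one_add_div_self_le_inv (norm_nonneg y)
  obtain ⟨M, hM⟩ := (isCompact_closedBall (0 : E) 1).exists_bound_of_continuousOn hf.continuousOn
  have hball : IntegrableOn (fun y => log ((1 + ‖y‖) / ‖y‖) * f y) (ball 0 1) μ := by
    refine integrableOn_ball_of_norm_le_rpow hd.le (α := 1) (C := M) (by exact_mod_cast hd) ?_ hmeas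
    filter_upwards [ae_restrict_mem measurableSet_ball] with y hy
    rw [rpow_neg_one, mul_comm M]
    exact (hnorm y).trans (by gcongr; exact hM y (ball_subset_closedBall hy))
  have hcompl : IntegrableOn (fun y => log ((1 + ‖y‖) / ‖y‖) * f y) (ball 0 1)ᶜ μ := by
    refine hfi.norm.integrableOn.mono' hmeas.restrict ?_
    filter_upwards [ae_restrict_mem measurableSet_ball.compl] with y hy
    have hy : 1 ≤ ‖y‖ := by simpa using hy
    exact (hnorm y).trans (mul_le_of_le_one_left (norm_nonneg _) (inv_le_one_of_one_le₀ hy))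
  simpa using hball.union hcompl

theorem exists_integral_log_norm_sub_div_norm_mul_le (hd : 1 < Module.finrank ℝ E) {f : E → ℝ}
    (hf : Continuous f) (hfi : Integrable f μ) (hf_nonneg : ∀ y, 0 ≤ f y) :
    ∃ C, ∀ x : E, 1 ≤ ‖x‖ →
      ∫ y, log (‖x - y‖ / ‖y‖) * f y ∂μ ≤ log ‖x‖ * ∫ y, f y ∂μ + C := by
  have hH := integrable_log_one_add_norm_div_norm_mul hd hf hfi
  refine ⟨∫ y, log ((1 + ‖y‖) / ‖y‖) * f y ∂μ, fun x hx => ?_⟩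
  by_cases hint : Integrable (fun y => log (‖x - y‖ / ‖y‖) * f y) μ
  · rw [← integral_const_mul, ← integral_add (hfi.const_mul _) hH]
    refine integral_mono hint ((hfi.const_mul _).add hH) fun y => ?_
    rw [← add_mul]
    exact mul_le_mul_of_nonneg_right (log_norm_sub_div_norm_le hx y) (hf_nonneg y)
  · -- the left side is the junk value `0`, and the right side is nonnegative
    rw [integral_undef hint]
    exact add_nonneg (mul_nonneg (log_nonneg hx) (integral_nonneg hf_nonneg))
      (integral_nonneg fun y =>
        mul_nonneg (log_one_add_div_self_nonneg (norm_nonneg y)) (hf_nonneg y))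

end

theorem log_potential_upper_bound_4d_general
    (v : EuclideanSpace ℝ (Fin 4) → ℝ)
    (hv_cont : Continuous v)
    (hv4 : Integrable (fun x => v x ^ 4)) :
    ∃ C : ℝ, ∀ x : EuclideanSpace ℝ (Fin 4), 2 ≤ ‖x‖ →
      (1 / (8 * π ^ 2)) * ∫ y, Real.log (‖x - y‖ / ‖y‖) * v y ^ 4 ≤
        ((1 / (8 * π ^ 2)) * ∫ y, v y ^ 4) * Real.log ‖x‖ + C := by
  obtain ⟨C, hC⟩ := exists_integral_log_norm_sub_div_norm_mul_le (μ := volume)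
    (f := fun y => v y ^ 4) (by simp) (by fun_prop) hv4 fun y => by positivity
  refine ⟨1 / (8 * π ^ 2) * C, fun x hx => ?_⟩
  calc (1 / (8 * π ^ 2)) * ∫ y, log (‖x - y‖ / ‖y‖) * v y ^ 4
      ≤ (1 / (8 * π ^ 2)) * (log ‖x‖ * (∫ y, v y ^ 4) + C) := by
        gcongr
        exact hC x (by linarith)
    _ = ((1 / (8 * π ^ 2)) * ∫ y, v y ^ 4) * log ‖x‖ + 1 / (8 * π ^ 2) * C := by ring

/-- Lemma 3.3: upper bound `q(x) ≤ α ln|x| + C` for the logarithmic potential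
`q(x) = (1/(8π²)) ∫ ln(|x-y|/|y|) v(y)⁴ dy` with total curvature
`α = (1/(8π²)) ∫ v⁴`. -/
theorem log_potential_upper_bound_4d
    (v : EuclideanSpace ℝ (Fin 4) → ℝ)
    (hv_cont : Continuous v) (hv_nonneg : ∀ x, 0 ≤ v x)
    (hv4 : Integrable (fun x => v x ^ 4)) :
    ∃ C : ℝ, ∀ x : EuclideanSpace ℝ (Fin 4), 2 ≤ ‖x‖ →
      (1 / (8 * π ^ 2)) * ∫ y, Real.log (‖x - y‖ / ‖y‖) * v y ^ 4 ≤
        ((1 / (8 * π ^ 2)) * ∫ y, v y ^ 4) * Real.log ‖x‖ + C :=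
  log_potential_upper_bound_4d_general v hv_cont hv4
end

section
/- Let K>0. Let u:ℝ⁴→ℝ be continuous with u(x) = O(|x|^K) as |x|→∞, and let v:ℝ⁴→ℝ be a nonnegative C² function satisfying −Δv(x) = u(x)² for all x∈ℝ⁴ and ∫_{ℝ⁴} v(x)⁴ dx < ∞. Then v(x) = O(|x|^{2K}) as |x|→∞. -/
open MeasureTheory Real Filter

/-- The Euclidean Laplacian of a real-valued function on `ℝⁿ`, as the sum of the
pure second derivatives in the coordinate directions. -/
noncomputable def lap (n : ℕ) (f : EuclideanSpace ℝ (Fin n) → ℝ)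
    (x : EuclideanSpace ℝ (Fin n)) : ℝ :=
  ∑ i : Fin n, iteratedFDeriv ℝ 2 f x ![EuclideanSpace.single i 1, EuclideanSpace.single i 1]

/-!
A weighted sub-mean-value inequality. For the weight `φ(z) = (1 - |z|²)₊`, the function `φ²` is
`C¹` with gradient `-4 φ(z) z`, so integrating by parts gives
`d/dt ∫ v(x + t z) φ(z) dz = (t/4) ∫ Δv(x + t z) φ(z)² dz`.
If `-Δv ≤ M` on the unit ball around `x`, then `t ↦ ∫ v(x + t z) φ(z) dz + (M/8) t² ∫ φ²` is
nondecreasing on `[0, 1]`, and comparing `t = 0` with `t = 1` bounds `v(x) ∫ φ` by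
`∫ v(x + z) φ(z) dz + (M/8) ∫ φ² ≤ |B₁| + ∫ v⁴ + (M/8) ∫ φ²` (as `v ≤ 1 + v⁴`).
Applied with `M = sup u²` over `B(x, 1)`, which is `O(|x|^{2K})`, this gives the growth bound.
-/

open InnerProductSpace Laplacian

theorem hasDerivAt_max_zero_sq (w : ℝ) : HasDerivAt (fun w : ℝ => max w 0 ^ 2) (2 * max w 0) w := by
  refine hasDerivAt_of_hasDerivAt_of_ne' (f := fun w : ℝ => max w 0 ^ 2) (g := fun w => 2 * max w 0)
    (x := 0) (fun y hy => ?_) (by fun_prop) (by fun_prop) w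
  rcases hy.lt_or_gt with hy | hy
  · rw [max_eq_right hy.le, mul_zero]
    refine (hasDerivAt_const y (0 : ℝ)).congr_of_eventuallyEq ?_
    filter_upwards [Iio_mem_nhds hy] with z hz
    simp [max_eq_right (Set.mem_Iio.mp hz).le]
  · rw [max_eq_left hy.le]
    refine (hasDerivAt_pow 2 y).congr_of_eventuallyEq ?_ |>.congr_deriv (by ring)
    filter_upwards [Ioi_mem_nhds hy] with z hz
    simp [max_eq_left (Set.mem_Ioi.mp hz).le]

theorem self_le_one_add_pow {a : ℝ} (ha : 0 ≤ a) {p : ℕ} (hp : p ≠ 0) : a ≤ 1 + a ^ p := by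
  rcases le_total a 1 with h | h
  · linarith [pow_nonneg ha p]
  · linarith [le_self_pow₀ h hp]

section Bump

variable {E : Type*} [NormedAddCommGroup E]

noncomputable def bump (z : E) : ℝ := max (1 - ‖z‖ ^ 2) 0

theorem bump_nonneg (z : E) : 0 ≤ bump z := le_max_right _ _

theorem bump_le_one (z : E) : bump z ≤ 1 :=
  max_le (by nlinarith [norm_nonneg z]) zero_le_one

theorem bump_eq_zero_of_one_le_norm {z : E} (hz : 1 ≤ ‖z‖) : bump z = 0 :=
  max_eq_right (by nlinarith)

theorem support_bump_subset : Function.support (bump : E → ℝ) ⊆ Metric.closedBall 0 1 := by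
  intro z hz
  by_contra h
  exact hz (bump_eq_zero_of_one_le_norm (by simpa using h : 1 < ‖z‖).le)

theorem continuous_bump : Continuous (bump : E → ℝ) := by
  unfold bump; fun_prop

theorem norm_apply_comp_add_smul_mul_bump_le [NormedSpace ℝ E] {L : E → E →L[ℝ] ℝ} {x : E} {r C : ℝ}
    (hC : ∀ y ∈ Metric.closedBall x r, ‖L y‖ ≤ C) {s : ℝ} (hs : |s| ≤ r) (z : E) :
    ‖L (x + s • z) z * bump z‖ ≤ C * bump z := by
  rcases le_or_gt ‖z‖ 1 with hz | hz
  · have hmem : x + s • z ∈ Metric.closedBall x r := by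
      rw [Metric.mem_closedBall, dist_self_add_left, norm_smul, Real.norm_eq_abs]
      nlinarith [norm_nonneg z, abs_nonneg s]
    rw [norm_mul, Real.norm_of_nonneg (bump_nonneg z)]
    refine mul_le_mul_of_nonneg_right ?_ (bump_nonneg z)
    exact ((L _).le_opNorm z).trans (mul_le_of_le_one_right (norm_nonneg _) hz) |>.trans (hC _ hmem)
  · simp [bump_eq_zero_of_one_le_norm hz.le]

variable [ProperSpace E]

theorem hasCompactSupport_bump : HasCompactSupport (bump : E → ℝ) :=
  .of_support_subset_isCompact (isCompact_closedBall 0 1) support_bump_subset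

variable [MeasurableSpace E] [OpensMeasurableSpace E] {μ : Measure E} [IsFiniteMeasureOnCompacts μ]

theorem Continuous.integrable_mul_bump {f : E → ℝ} (hf : Continuous f) {k : ℕ} (hk : k ≠ 0) :
    Integrable (fun z => f z * bump z ^ k) μ := by
  refine (hf.mul (continuous_bump.pow k)).integrable_of_hasCompactSupport ?_
  exact HasCompactSupport.mul_left (f := f) (hasCompactSupport_bump.comp_left (zero_pow hk))

theorem integral_bump_pos [μ.IsOpenPosMeasure] : 0 < ∫ z, bump z ∂μ := by
  rw [integral_pos_iff_support_of_nonneg bump_nonneg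
    (by simpa using continuous_const.integrable_mul_bump one_ne_zero (f := fun _ => (1 : ℝ)))]
  refine (Metric.measure_ball_pos μ (0 : E) one_pos).trans_le (measure_mono fun z hz => ?_)
  have hz : ‖z‖ < 1 := by simpa using hz
  exact (lt_max_of_lt_left (by nlinarith [norm_nonneg z])).ne'

theorem integral_comp_add_mul_bump_le [MeasurableAdd E] [μ.IsAddLeftInvariant] {v : E → ℝ}
    (hv : Continuous v) (hv0 : ∀ y, 0 ≤ v y) {p : ℕ} (hp : p ≠ 0)
    (hvp : Integrable (fun y => v y ^ p) μ) (x : E) :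
    ∫ z, v (x + z) * bump z ∂μ ≤ μ.real (Metric.closedBall 0 1) + ∫ y, v y ^ p ∂μ := by
  set B := Metric.closedBall (0 : E) 1
  have hball : Integrable (B.indicator 1) μ :=
    (integrable_indicator_iff measurableSet_closedBall).2
      (integrableOn_const (C := (1 : ℝ)) measure_closedBall_lt_top.ne)
  have hpt : ∀ z, v (x + z) * bump z ≤ B.indicator 1 z + v (x + z) ^ p := by
    intro z
    rcases le_or_gt ‖z‖ 1 with hz | hz
    · rw [Set.indicator_of_mem (by simpa [B] using hz), Pi.one_apply]
      calc v (x + z) * bump z ≤ v (x + z) * 1 :=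
            mul_le_mul_of_nonneg_left (bump_le_one z) (hv0 _)
        _ ≤ 1 + v (x + z) ^ p := by simpa using self_le_one_add_pow (hv0 _) hp
    · rw [bump_eq_zero_of_one_le_norm hz.le, mul_zero]
      exact add_nonneg (Set.indicator_nonneg (fun _ _ => zero_le_one) z) (pow_nonneg (hv0 _) p)
  calc ∫ z, v (x + z) * bump z ∂μ
      ≤ ∫ z, B.indicator 1 z + v (x + z) ^ p ∂μ :=
        integral_mono ((hv.comp (continuous_const_add x)).integrable_mul_bump one_ne_zero |>.congr
          (by simp)) (hball.add (hvp.comp_add_left x)) hpt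
    _ = μ.real B + ∫ y, v y ^ p ∂μ := by
        rw [integral_add hball (hvp.comp_add_left x),
          integral_indicator_one measurableSet_closedBall,
          integral_add_left_eq_self (fun y => v y ^ p)]

variable [NormedSpace ℝ E]

theorem hasDerivAt_integral_comp_add_smul_mul_bump {v : E → ℝ} (hv : ContDiff ℝ 1 v)
    (x : E) (t : ℝ) :
    HasDerivAt (fun s => ∫ z, v (x + s • z) * bump z ∂μ)
      (∫ z, fderiv ℝ v (x + t • z) z * bump z ∂μ) t := by
  have hDv : Continuous (fderiv ℝ v) := hv.continuous_fderiv one_ne_zero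
  obtain ⟨C, hC⟩ := (isCompact_closedBall x (|t| + 1)).exists_bound_of_continuousOn
    hDv.continuousOn
  have hbound : ∀ z, ∀ s ∈ Metric.ball t 1,
      ‖fderiv ℝ v (x + s • z) z * bump z‖ ≤ C * bump z := by
    intro z s hs
    rw [Metric.mem_ball, Real.dist_eq] at hs
    exact norm_apply_comp_add_smul_mul_bump_le hC (by linarith [abs_sub_abs_le_abs_sub s t]) z
  have hline : ∀ (z : E) (s : ℝ), HasDerivAt (fun s : ℝ => x + s • z) z s := fun z s => by
    simpa using ((hasDerivAt_id s).smul_const z).const_add x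
  have hcont : ∀ s : ℝ, Continuous fun z : E => x + s • z := fun s => by fun_prop
  refine (hasDerivAt_integral_of_dominated_loc_of_deriv_le
    (F := fun s z => v (x + s • z) * bump z) (Metric.ball_mem_nhds t one_pos)
    (Eventually.of_forall fun s => ((hv.continuous.comp (hcont s)).mul
      continuous_bump).aestronglyMeasurable)
    (by simpa using (hv.continuous.comp (hcont t)).integrable_mul_bump one_ne_zero (μ := μ))
    (((hDv.comp (hcont t)).clm_apply continuous_id).mul continuous_bump).aestronglyMeasurable
    (Eventually.of_forall hbound)
    (by simpa using continuous_const.integrable_mul_bump one_ne_zero (f := fun _ => C) (μ := μ))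
    (Eventually.of_forall fun z s _ => ?_)).2
  exact ((hv.differentiable one_ne_zero (x + s • z)).hasFDerivAt.comp_hasDerivAt s
    (hline z s)).mul_const (bump z)

end Bump

section Gradient

variable {E : Type*} [NormedAddCommGroup E] [InnerProductSpace ℝ E]

theorem hasFDerivAt_bump_sq (z : E) :
    HasFDerivAt (fun z => bump z ^ 2) (-(4 * bump z) • innerSL ℝ z) z := by
  have h := (hasDerivAt_max_zero_sq (1 - ‖z‖ ^ 2)).comp_hasFDerivAt z
    ((hasStrictFDerivAt_norm_sq z).hasFDerivAt.const_sub 1)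
  refine h.congr_fderiv ?_
  ext y
  simp only [bump, smul_apply, neg_apply, smul_eq_mul, nsmul_eq_mul]
  ring

theorem fderiv_bump_sq_apply (z y : E) :
    fderiv ℝ (fun z => bump z ^ 2) z y = -(4 * bump z * inner ℝ z y) := by
  simp [(hasFDerivAt_bump_sq z).fderiv, mul_assoc]

variable [FiniteDimensional ℝ E]

theorem ContDiff.continuous_laplacian {f : E → ℝ} (hf : ContDiff ℝ 2 f) : Continuous (Δ f) := by
  rw [laplacian_eq_iteratedFDeriv_stdOrthonormalBasis]
  have := hf.continuous_iteratedFDeriv (m := 2) le_rfl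
  fun_prop

variable [MeasurableSpace E] [BorelSpace E] {μ : Measure E} [μ.IsAddHaarMeasure]

theorem integrable_mul_fderiv_bump_sq {g : E → ℝ} (hg : Continuous g) (e : E) :
    Integrable (fun z => g z * fderiv ℝ (fun z => bump z ^ 2) z e) μ := by
  have hgrad : (fun z => g z * fderiv ℝ (fun z => bump z ^ 2) z e) =
      fun z => (-(4 * g z * inner ℝ z e)) * bump z ^ 1 := by
    ext z; rw [fderiv_bump_sq_apply]; ring
  exact hgrad ▸ (by fun_prop : Continuous fun z => -(4 * g z * inner ℝ z e)).integrable_mul_bump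
    one_ne_zero

theorem integral_mul_fderiv_bump_sq {g : E → ℝ} (hg : ContDiff ℝ 1 g) (e : E) :
    ∫ z, g z * fderiv ℝ (fun z => bump z ^ 2) z e ∂μ =
      -∫ z, fderiv ℝ g z e * bump z ^ 2 ∂μ := by
  refine integral_mul_fderiv_eq_neg_fderiv_mul_of_integrable
    (((hg.continuous_fderiv one_ne_zero).clm_apply continuous_const).integrable_mul_bump
      two_ne_zero)
    (integrable_mul_fderiv_bump_sq hg.continuous e)
    (hg.continuous.integrable_mul_bump two_ne_zero)
    (fun z _ => hg.differentiable one_ne_zero z)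
    (fun z _ => (hasFDerivAt_bump_sq z).differentiableAt)

theorem integral_fderiv_comp_add_smul_mul_bump {v : E → ℝ} (hv : ContDiff ℝ 2 v) (x : E)
    (t : ℝ) :
    ∫ z, fderiv ℝ v (x + t • z) z * bump z ∂μ = t / 4 * ∫ z, Δ v (x + t • z) * bump z ^ 2 ∂μ := by
  set b := stdOrthonormalBasis ℝ E
  set g : _ → E → ℝ := fun i z => fderiv ℝ v (x + t • z) (b i)
  have hv1 : ContDiff ℝ 1 (fderiv ℝ v) := hv.fderiv_right le_rfl
  have hline : ∀ z, HasFDerivAt (fun z : E => x + t • z) (t • ContinuousLinearMap.id ℝ E) z :=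
    fun z => ((hasFDerivAt_id z).const_smul t).const_add x
  have hg : ∀ i, ContDiff ℝ 1 (g i) := fun i =>
    (hv1.comp (contDiff_const.add (contDiff_const.smul contDiff_id))).clm_apply contDiff_const
  have hdg : ∀ i z, fderiv ℝ (g i) z (b i) = t * iteratedFDeriv ℝ 2 v (x + t • z) ![b i, b i] := by
    intro i z
    have : HasFDerivAt (g i) _ z := (ContinuousLinearMap.apply ℝ ℝ (b i)).hasFDerivAt.comp z
      (((hv1.differentiable one_ne_zero) _).hasFDerivAt.comp z (hline z))
    rw [this.fderiv, iteratedFDeriv_two_apply]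
    simp
  have hpt : ∀ z, fderiv ℝ v (x + t • z) z * bump z =
      -(1 / 4) * ∑ i, g i z * fderiv ℝ (fun z => bump z ^ 2) z (b i) := by
    intro z
    have hrepr : fderiv ℝ v (x + t • z) z = ∑ i, inner ℝ (b i) z * g i z := by
      simpa [g] using (congrArg (fderiv ℝ v (x + t • z)) (b.sum_repr' z)).symm
    simp only [hrepr, fderiv_bump_sq_apply, Finset.sum_mul, Finset.mul_sum, real_inner_comm z]
    refine Finset.sum_congr rfl fun i _ => by ring
  have hH : ∀ i, Continuous fun z => iteratedFDeriv ℝ 2 v (x + t • z) ![b i, b i] := by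
    have := hv.continuous_iteratedFDeriv (m := 2) le_rfl
    fun_prop
  calc ∫ z, fderiv ℝ v (x + t • z) z * bump z ∂μ
      = -(1 / 4) * ∑ i, ∫ z, g i z * fderiv ℝ (fun z => bump z ^ 2) z (b i) ∂μ := by
        rw [integral_congr_ae (Eventually.of_forall hpt), integral_const_mul,
          integral_finsetSum _ fun i _ => integrable_mul_fderiv_bump_sq (hg i).continuous _]
    _ = t / 4 * ∑ i, ∫ z, iteratedFDeriv ℝ 2 v (x + t • z) ![b i, b i] * bump z ^ 2 ∂μ := by
        simp only [integral_mul_fderiv_bump_sq (hg _), hdg, mul_assoc, integral_const_mul,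
          Finset.sum_neg_distrib, ← Finset.mul_sum]
        ring
    _ = t / 4 * ∫ z, Δ v (x + t • z) * bump z ^ 2 ∂μ := by
        rw [← integral_finsetSum _ fun i _ => (hH i).integrable_mul_bump two_ne_zero,
          laplacian_eq_iteratedFDeriv_orthonormalBasis v b]
        simp only [Finset.sum_mul]

theorem mul_integral_bump_le_of_neg_laplacian_le {v : E → ℝ} (hv : ContDiff ℝ 2 v) {x : E}
    {M : ℝ} (hM : ∀ y ∈ Metric.closedBall x 1, -Δ v y ≤ M) :
    v x * ∫ z, bump z ∂μ ≤ ∫ z, v (x + z) * bump z ∂μ + M / 8 * ∫ z, bump z ^ 2 ∂μ := by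
  set J := ∫ z, bump z ^ 2 ∂μ
  set H : ℝ → ℝ := fun t => ∫ z, v (x + t • z) * bump z ∂μ + M / 8 * J * t ^ 2
  have hH : ∀ t, HasDerivAt H (t / 4 * (∫ z, Δ v (x + t • z) * bump z ^ 2 ∂μ + M * J)) t := by
    intro t
    have := (hasDerivAt_integral_comp_add_smul_mul_bump (μ := μ) (hv.of_le one_le_two) x t).add
      ((hasDerivAt_pow 2 t).const_mul (M / 8 * J))
    rw [integral_fderiv_comp_add_smul_mul_bump hv] at this
    refine this.congr_deriv ?_
    norm_num
    ring
  have hH' : ∀ t ∈ Set.Icc (0 : ℝ) 1,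
      0 ≤ t / 4 * (∫ z, Δ v (x + t • z) * bump z ^ 2 ∂μ + M * J) := by
    rintro t ⟨ht0, ht1⟩
    refine mul_nonneg (by positivity) ?_
    have hle : ∫ z, -M * bump z ^ 2 ∂μ ≤ ∫ z, Δ v (x + t • z) * bump z ^ 2 ∂μ := by
      refine integral_mono (continuous_const.integrable_mul_bump two_ne_zero)
        ((hv.continuous_laplacian.comp (by fun_prop)).integrable_mul_bump two_ne_zero) fun z => ?_
      rcases le_or_gt ‖z‖ 1 with hz | hz
      · refine mul_le_mul_of_nonneg_right ?_ (sq_nonneg _)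
        have hmem : x + t • z ∈ Metric.closedBall x 1 := by
          rw [Metric.mem_closedBall, dist_self_add_left, norm_smul, Real.norm_of_nonneg ht0]
          nlinarith [norm_nonneg z]
        linarith [hM _ hmem]
      · simp [bump_eq_zero_of_one_le_norm hz.le]
    rw [integral_const_mul] at hle
    linarith
  have hmono : MonotoneOn H (Set.Icc 0 1) :=
    monotoneOn_of_deriv_nonneg (convex_Icc 0 1) (fun t _ => (hH t).continuousAt.continuousWithinAt)
      (fun t _ => (hH t).differentiableAt.differentiableWithinAt)
      fun t ht => (hH t).deriv ▸ hH' t (interior_subset ht)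
  have h01 := hmono ⟨le_rfl, zero_le_one⟩ ⟨zero_le_one, le_rfl⟩ zero_le_one
  simpa [H, integral_const_mul] using h01

theorem le_div_integral_bump_of_neg_laplacian_le {v : E → ℝ} (hv : ContDiff ℝ 2 v)
    (hv0 : ∀ y, 0 ≤ v y) {p : ℕ} (hp : p ≠ 0) (hvp : Integrable (fun y => v y ^ p) μ) {x : E}
    {M : ℝ} (hM : ∀ y ∈ Metric.closedBall x 1, -Δ v y ≤ M) :
    v x ≤ (μ.real (Metric.closedBall 0 1) + ∫ y, v y ^ p ∂μ + M / 8 * ∫ z, bump z ^ 2 ∂μ) /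
      ∫ z, bump z ∂μ := by
  rw [le_div_iff₀ integral_bump_pos]
  linarith [mul_integral_bump_le_of_neg_laplacian_le (μ := μ) hv hM,
    integral_comp_add_mul_bump_le hv.continuous hv0 hp hvp x]

end Gradient

theorem sq_le_on_closedBall_of_abs_le_rpow {F : Type*} [NormedAddCommGroup F] {u : F → ℝ}
    {C R K : ℝ} (hC : 0 ≤ C) (hR : 0 ≤ R) (hK : 0 ≤ K)
    (hu : ∀ y, R ≤ ‖y‖ → |u y| ≤ C * ‖y‖ ^ K) {x : F} (hx : R + 1 ≤ ‖x‖) :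
    ∀ y ∈ Metric.closedBall x 1, u y ^ 2 ≤ C ^ 2 * (2 * ‖x‖) ^ (2 * K) := by
  intro y hy
  rw [mem_closedBall_iff_norm] at hy
  have hRy : R ≤ ‖y‖ := by linarith [norm_sub_norm_le x y, norm_sub_rev x y]
  have hyx : ‖y‖ ≤ 2 * ‖x‖ := by linarith [norm_le_norm_add_norm_sub' y x]
  calc u y ^ 2 = |u y| ^ 2 := (sq_abs _).symm
    _ ≤ (C * (2 * ‖x‖) ^ K) ^ 2 := by
        gcongr
        exact (hu y hRy).trans (by gcongr)
    _ = C ^ 2 * (2 * ‖x‖) ^ (2 * K) := by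
        rw [mul_pow, mul_comm 2 K, Real.rpow_mul (by positivity)]
        norm_cast

theorem lap_eq_laplacian (n : ℕ) (f : EuclideanSpace ℝ (Fin n) → ℝ) : lap n f = Δ f := by
  rw [laplacian_eq_iteratedFDeriv_orthonormalBasis f (EuclideanSpace.basisFun (Fin n) ℝ)]
  ext x
  simp [lap]

theorem v_polynomial_growth_4d_general
    (K : ℝ) (hK : 0 < K)
    (u v : EuclideanSpace ℝ (Fin 4) → ℝ)
    (hu_growth : ∃ C R : ℝ, 0 < C ∧ 0 < R ∧
      ∀ x : EuclideanSpace ℝ (Fin 4), R ≤ ‖x‖ → |u x| ≤ C * ‖x‖ ^ K)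
    (hv_smooth : ContDiff ℝ 2 v) (hv_nonneg : ∀ x, 0 ≤ v x)
    (hv_eq : ∀ x, -lap 4 v x = u x ^ 2)
    (hv4 : Integrable (fun x => v x ^ 4)) :
    ∃ C R : ℝ, 0 < C ∧ 0 < R ∧
      ∀ x : EuclideanSpace ℝ (Fin 4), R ≤ ‖x‖ → |v x| ≤ C * ‖x‖ ^ (2 * K) := by
  obtain ⟨C, R, hC, hR, hu⟩ := hu_growth
  set A := volume.real (Metric.closedBall (0 : EuclideanSpace ℝ (Fin 4)) 1) + ∫ y, v y ^ 4
  set B := C ^ 2 * 2 ^ (2 * K) / 8 * ∫ z : EuclideanSpace ℝ (Fin 4), bump z ^ 2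
  have hA : 0 < A := add_pos_of_pos_of_nonneg
    (ENNReal.toReal_pos (Metric.measure_closedBall_pos _ _ one_pos).ne'
      measure_closedBall_lt_top.ne)
    (integral_nonneg fun y => by positivity)
  have hB : 0 ≤ B := by positivity
  have hI := integral_bump_pos (μ := (volume : Measure (EuclideanSpace ℝ (Fin 4))))
  refine ⟨(A + B) / ∫ z, bump z, R + 1, by positivity, by positivity, fun x hx => ?_⟩
  have hx1 : 1 ≤ ‖x‖ ^ (2 * K) := Real.one_le_rpow (by linarith) (by positivity)
  have hlap : ∀ y ∈ Metric.closedBall x 1, -Δ v y ≤ C ^ 2 * (2 * ‖x‖) ^ (2 * K) := fun y hy => by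
    simpa [← lap_eq_laplacian, hv_eq] using
      sq_le_on_closedBall_of_abs_le_rpow hC.le hR.le hK.le hu hx y hy
  calc |v x| = v x := abs_of_nonneg (hv_nonneg x)
    _ ≤ (A + B * ‖x‖ ^ (2 * K)) / ∫ z, bump z := by
        convert le_div_integral_bump_of_neg_laplacian_le hv_smooth hv_nonneg four_ne_zero hv4 hlap
          using 2
        rw [Real.mul_rpow zero_le_two (norm_nonneg x)]
        ring
    _ ≤ (A + B) / (∫ z, bump z) * ‖x‖ ^ (2 * K) := by
        rw [div_mul_eq_mul_div]
        gcongr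
        nlinarith

/-- Lemma 3.6 (ii): if `u = O(|x|^K)` and `-Δv = u²` with `∫ v⁴ < ∞`, then
`v = O(|x|^{2K})` at infinity. -/
theorem v_polynomial_growth_4d
    (K : ℝ) (hK : 0 < K)
    (u v : EuclideanSpace ℝ (Fin 4) → ℝ)
    (hu_cont : Continuous u)
    (hu_growth : ∃ C R : ℝ, 0 < C ∧ 0 < R ∧
      ∀ x : EuclideanSpace ℝ (Fin 4), R ≤ ‖x‖ → |u x| ≤ C * ‖x‖ ^ K)
    (hv_smooth : ContDiff ℝ 2 v) (hv_nonneg : ∀ x, 0 ≤ v x)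
    (hv_eq : ∀ x, -lap 4 v x = u x ^ 2)
    (hv4 : Integrable (fun x => v x ^ 4)) :
    ∃ C R : ℝ, 0 < C ∧ 0 < R ∧
      ∀ x : EuclideanSpace ℝ (Fin 4), R ≤ ‖x‖ → |v x| ≤ C * ‖x‖ ^ (2 * K) :=
  v_polynomial_growth_4d_general K hK u v hu_growth hv_smooth hv_nonneg hv_eq hv4
end

section
/- Let v:ℝ³→ℝ be continuous and not identically zero, and suppose u(x) := (1/(2π²))∫_{ℝ³} v(y)⁴/|x−y|² dy is finite for every x∈ℝ³. Then ∫_{ℝ³} v(y)⁴/|y|² dy < ∞, and there exist constants C>0 and R>0 such that u(x) ≥ C/|x|² whenever |x| ≥ R. -/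
open MeasureTheory Real Filter

/-! Restricting the integral to a ball `closedBall 0 R` carrying a positive amount `I` of the
mass of `v⁴` gives the bound: for `‖x‖ > R` and `‖y‖ ≤ R` one has `‖x - y‖ ≤ 2‖x‖`, so
`∫ v⁴(y)/‖x - y‖² dy ≥ I / (4‖x‖²)`. Such a ball exists because `v⁴` is continuous, nonnegative
and positive somewhere, and Lebesgue measure charges nonempty open sets. -/

section

variable {E : Type*} [NormedAddCommGroup E] [MeasurableSpace E] [BorelSpace E] [ProperSpace E]
  {μ : Measure E} [μ.IsOpenPosMeasure] [IsFiniteMeasureOnCompacts μ]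

theorem Continuous.exists_pos_setIntegral_closedBall {g : E → ℝ} (hg : Continuous g)
    (hg_nonneg : 0 ≤ g) (hg_ne : g ≠ 0) :
    ∃ R > 0, 0 < ∫ y in Metric.closedBall 0 R, g y ∂μ := by
  obtain ⟨x₀, hx₀⟩ : ∃ x₀, g x₀ ≠ 0 := Function.ne_iff.mp hg_ne
  refine ⟨‖x₀‖ + 1, by positivity, ?_⟩
  rw [setIntegral_pos_iff_support_of_nonneg_ae (ae_of_all _ hg_nonneg)
    (hg.continuousOn.integrableOn_compact (isCompact_closedBall 0 _))]
  have h_open : IsOpen (Function.support g ∩ Metric.ball 0 (‖x₀‖ + 1)) :=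
    hg.isOpen_support.inter Metric.isOpen_ball
  have h_mem : x₀ ∈ Function.support g ∩ Metric.ball 0 (‖x₀‖ + 1) :=
    ⟨hx₀, by simp⟩
  exact (h_open.measure_pos μ ⟨x₀, h_mem⟩).trans_le
    (measure_mono (Set.inter_subset_inter_right _ Metric.ball_subset_closedBall))

end

theorem norm_sub_pow_le_two_pow_mul {E : Type*} [SeminormedAddCommGroup E] {x y : E}
    (hxy : ‖y‖ ≤ ‖x‖) (n : ℕ) : ‖x - y‖ ^ n ≤ 2 ^ n * ‖x‖ ^ n := by
  rw [← mul_pow]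
  gcongr
  linarith [norm_sub_le x y]

theorem setIntegral_closedBall_div_le_integral_div_norm_sub_pow {E : Type*}
    [NormedAddCommGroup E] [MeasurableSpace E] [OpensMeasurableSpace E] {μ : Measure E}
    {g : E → ℝ} (hg_nonneg : 0 ≤ g) {n : ℕ} {x : E}
    (hint : Integrable (fun y => g y / ‖x - y‖ ^ n) μ) {R : ℝ} (hR : R < ‖x‖) :
    (∫ y in Metric.closedBall 0 R, g y ∂μ) / (2 ^ n * ‖x‖ ^ n) ≤
      ∫ y, g y / ‖x - y‖ ^ n ∂μ := by
  have h_kernel : ∀ y ∈ Metric.closedBall (0 : E) R,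
      g y / (2 ^ n * ‖x‖ ^ n) ≤ g y / ‖x - y‖ ^ n := by
    intro y hy
    have hy : ‖y‖ ≤ R := by simpa using hy
    have hxy : 0 < ‖x - y‖ := by linarith [norm_sub_norm_le x y]
    exact div_le_div_of_nonneg_left (hg_nonneg y) (by positivity)
      (norm_sub_pow_le_two_pow_mul (by linarith) n)
  have h_nonneg : 0 ≤ᵐ[μ] fun y => g y / ‖x - y‖ ^ n :=
    ae_of_all _ fun y => div_nonneg (hg_nonneg y) (by positivity)
  calc (∫ y in Metric.closedBall 0 R, g y ∂μ) / (2 ^ n * ‖x‖ ^ n)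
      = ∫ y in Metric.closedBall 0 R, g y / (2 ^ n * ‖x‖ ^ n) ∂μ := (integral_div _ _).symm
    _ ≤ ∫ y in Metric.closedBall 0 R, g y / ‖x - y‖ ^ n ∂μ :=
        integral_mono_of_nonneg (ae_of_all _ fun y => div_nonneg (hg_nonneg y) (by positivity))
          hint.integrableOn ((ae_restrict_iff' measurableSet_closedBall).mpr
            (ae_of_all _ h_kernel))
    _ ≤ ∫ y, g y / ‖x - y‖ ^ n ∂μ := setIntegral_le_integral hint h_nonneg

/-- Lower-bound assertion of Lemma 2.1: if `u(x) = (1/(2π²)) ∫ v(y)⁴/|x-y|² dy` is finite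
for every `x`, then `∫ v⁴/|y|² < ∞` and `u(x) ≥ C/|x|²` for large `|x|`. -/
theorem u_lower_bound_3d
    (v : EuclideanSpace ℝ (Fin 3) → ℝ)
    (hv_cont : Continuous v) (hv_ne : v ≠ 0)
    (hfin : ∀ x : EuclideanSpace ℝ (Fin 3),
      Integrable (fun y => v y ^ 4 / ‖x - y‖ ^ 2)) :
    (Integrable (fun y : EuclideanSpace ℝ (Fin 3) => v y ^ 4 / ‖y‖ ^ 2)) ∧
    ∃ C R : ℝ, 0 < C ∧ 0 < R ∧
      ∀ x : EuclideanSpace ℝ (Fin 3), R ≤ ‖x‖ →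
        C / ‖x‖ ^ 2 ≤ (1 / (2 * π ^ 2)) * ∫ y, v y ^ 4 / ‖x - y‖ ^ 2 := by
  refine ⟨by simpa using hfin 0, ?_⟩
  have hv4_nonneg : 0 ≤ fun y => v y ^ 4 := fun y => by positivity
  have hv4_ne : (fun y => v y ^ 4) ≠ 0 := fun h =>
    hv_ne (funext fun y => pow_eq_zero_iff (n := 4) (by norm_num) |>.mp (congrFun h y))
  obtain ⟨R, hR, hI⟩ := (hv_cont.pow 4).exists_pos_setIntegral_closedBall
    (μ := volume) hv4_nonneg hv4_ne
  set I := ∫ y in Metric.closedBall 0 R, v y ^ 4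
  refine ⟨1 / (2 * π ^ 2) * (I / 2 ^ 2), 2 * R, by positivity, by positivity, fun x hx => ?_⟩
  have hxR : R < ‖x‖ := by linarith
  calc 1 / (2 * π ^ 2) * (I / 2 ^ 2) / ‖x‖ ^ 2
      = 1 / (2 * π ^ 2) * (I / (2 ^ 2 * ‖x‖ ^ 2)) := by rw [mul_div_assoc, div_div]
    _ ≤ _ := by
        gcongr
        exact setIntegral_closedBall_div_le_integral_div_norm_sub_pow hv4_nonneg (hfin x) hxR
end
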